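/- Let h(ζ) = exp(-(-ζ)^{2/3}) for ζ in the half-plane type region G = {ζ ∈ ℂ : Re ζ - |Im ζ| < 0}, where w^{2/3} denotes the principal branch on ℂ minus the negative real axis. Then h is holomorphic on G, |h(ζ)| < 1 for ζ ∈ G, |h(ζ)| ≤ 1 for ζ in the closure of G with ζ ≠ 0, and h(ζ) → 1 as ζ → 0 in the closure of G. -/

import Mathlib

open Complex MeasureTheory Metric Set Finset

/-- Wirtinger derivative ∂f/∂z_j at z. -/
noncomputable def wd {n : ℕ} (f : (Fin n → ℂ) → ℂ) (j : Fin n) (z : Fin n → ℂ) : ℂ :=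
  (fderiv ℝ f z (Pi.single j 1) - Complex.I * fderiv ℝ f z (Pi.single j Complex.I)) / 2

/-- Conjugate Wirtinger derivative ∂f/∂z̄_j at z. -/
noncomputable def wdb {n : ℕ} (f : (Fin n → ℂ) → ℂ) (j : Fin n) (z : Fin n → ℂ) : ℂ :=
  (fderiv ℝ f z (Pi.single j 1) + Complex.I * fderiv ℝ f z (Pi.single j Complex.I)) / 2

/-- Complex Hessian (Levi form) L_f(z, X) = Σ_{j,k} ∂²f/∂z_j∂z̄_k (z) X_j conj(X_k). -/
noncomputable def levi {n : ℕ} (f : (Fin n → ℂ) → ℂ) (z X : Fin n → ℂ) : ℂ :=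
  ∑ j, ∑ k, wd (fun w => wdb f k w) j z * X j * (starRingEnd ℂ) (X k)

/-- Plurisubharmonicity on Ω via the sub-mean value inequality on complex discs,
for real-valued (usc) functions. -/
def PSubhOn {n : ℕ} (v : (Fin n → ℂ) → ℝ) (Ω : Set (Fin n → ℂ)) : Prop :=
  UpperSemicontinuousOn v Ω ∧
  ∀ z ∈ Ω, ∀ w : Fin n → ℂ, ∀ r : ℝ, 0 < r →
    (∀ ζ : ℂ, ‖ζ‖ ≤ r → z + ζ • w ∈ Ω) →
    v z ≤ (2 * Real.pi)⁻¹ * ∫ t in (0:ℝ)..(2 * Real.pi),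
      v (z + (((r : ℂ) * Complex.exp (t * Complex.I))) • w)

/-- `log u` is plurisubharmonic (for u ≥ 0, possibly vanishing), expressed via the
classical characterization: u·|exp ℓ| is plurisubharmonic for every ℂ-linear ℓ. -/
def LogPSHOn {n : ℕ} (u : (Fin n → ℂ) → ℝ) (Ω : Set (Fin n → ℂ)) : Prop :=
  ∀ ℓ : (Fin n → ℂ) →L[ℂ] ℂ, PSubhOn (fun z => u z * ‖Complex.exp (ℓ z)‖) Ω

/-- The Kobayashi metric F^K_Ω(z, X) = inf {1/λ : f ∈ H(𝔻, Ω), f 0 = z, f' 0 = λ X, λ > 0}. -/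
noncomputable def kob {n : ℕ} (Ω : Set (Fin n → ℂ)) (z X : Fin n → ℂ) : ℝ :=
  sInf { r : ℝ | ∃ f : ℂ → (Fin n → ℂ), DifferentiableOn ℂ f (ball (0:ℂ) 1) ∧
    (∀ ζ ∈ ball (0:ℂ) 1, f ζ ∈ Ω) ∧ f 0 = z ∧
    ∃ l : ℝ, 0 < l ∧ deriv f 0 = (l : ℂ) • X ∧ r = 1 / l }

/-- The Sibony metric F^S_Ω(z, X) = sup {(L_u(z,X))^{1/2} : u ∈ S_z(Ω)}. -/
noncomputable def sibony {n : ℕ} (Ω : Set (Fin n → ℂ)) (z X : Fin n → ℂ) : ℝ :=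
  sSup { s : ℝ | ∃ u : (Fin n → ℂ) → ℝ, ContDiffAt ℝ 2 u z ∧
    (∀ w ∈ Ω, u w ∈ Icc (0:ℝ) 1) ∧ u z = 0 ∧ LogPSHOn u Ω ∧
    s = Real.sqrt ((levi (fun w => (u w : ℂ)) z X).re) }

/-!
With `w = -ζ`, membership `ζ ∈ G` reads `0 < Re w + |Im w|`. The identity
`Re w + |Im w| = √2 ‖w‖ cos (|arg w| - π/4)` turns this into `|arg w| < 3π/4`, so
`|arg w^{2/3}| = (2/3) |arg w| < π/2` and `|h ζ| = exp (-Re w^{2/3}) < 1`; on the closure the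
same argument gives the non-strict bounds. The limit at `0` is continuity of `w ↦ w^{2/3}` at `0`.
-/

namespace Complex

theorem re_add_abs_im_eq (z : ℂ) :
    z.re + |z.im| = √2 * ‖z‖ * Real.cos (|arg z| - Real.pi / 4) := by
  have hsin : |z.im| = ‖z‖ * Real.sin |arg z| := by
    rw [← Real.abs_sin_eq_sin_abs_of_abs_le_pi (abs_arg_le_pi z), ← abs_norm, ← abs_mul,
      norm_mul_sin_arg]
  have hsq : √2 * √2 = 2 := Real.mul_self_sqrt zero_le_two
  rw [Real.cos_sub, Real.cos_pi_div_four, Real.sin_pi_div_four, Real.cos_abs, hsin,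
    ← norm_mul_cos_arg z]
  linear_combination (-‖z‖ * (Real.cos (arg z) + Real.sin |arg z|) / 2) * hsq

theorem abs_arg_lt_three_pi_div_four {z : ℂ} (h : 0 < z.re + |z.im|) :
    |arg z| < 3 * Real.pi / 4 := by
  rw [re_add_abs_im_eq] at h
  have hcos : 0 < Real.cos (|arg z| - Real.pi / 4) :=
    pos_of_mul_pos_right h (by positivity)
  by_contra! hge
  have := Real.cos_nonpos_of_pi_div_two_le_of_le (x := |arg z| - Real.pi / 4)
    (by linarith) (by linarith [abs_arg_le_pi z, Real.pi_pos])
  linarith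

theorem abs_arg_le_three_pi_div_four {z : ℂ} (h : 0 ≤ z.re + |z.im|) :
    |arg z| ≤ 3 * Real.pi / 4 := by
  rcases eq_or_ne z 0 with rfl | hz
  · rw [arg_zero, abs_zero]; positivity
  rw [re_add_abs_im_eq] at h
  have hcos : 0 ≤ Real.cos (|arg z| - Real.pi / 4) :=
    nonneg_of_mul_nonneg_right h (by positivity)
  by_contra! hgt
  have := Real.cos_neg_of_pi_div_two_lt_of_lt (x := |arg z| - Real.pi / 4)
    (by linarith) (by linarith [abs_arg_le_pi z, Real.pi_pos])
  linarith

theorem re_cpow_ofReal_pos {z : ℂ} {p : ℝ} (hp : |p| ≤ 2 / 3) (h : 0 < z.re + |z.im|) :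
    0 < (z ^ (p : ℂ)).re := by
  have hz : z ≠ 0 := by rintro rfl; simp at h
  rw [cpow_ofReal_re]
  refine mul_pos (Real.rpow_pos_of_pos (norm_pos_iff.2 hz) _) (Real.cos_pos_of_mem_Ioo ?_)
  have harg := abs_arg_lt_three_pi_div_four h
  have : |arg z * p| < Real.pi / 2 := by
    rw [abs_mul]; nlinarith [abs_nonneg (arg z), abs_nonneg p]
  exact ⟨by linarith [neg_abs_le (arg z * p)], by linarith [le_abs_self (arg z * p)]⟩

theorem re_cpow_ofReal_nonneg {z : ℂ} {p : ℝ} (hp : |p| ≤ 2 / 3) (h : 0 ≤ z.re + |z.im|) :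
    0 ≤ (z ^ (p : ℂ)).re := by
  rw [cpow_ofReal_re]
  refine mul_nonneg (Real.rpow_nonneg (norm_nonneg z) _) (Real.cos_nonneg_of_mem_Icc ?_)
  have harg := abs_arg_le_three_pi_div_four h
  have : |arg z * p| ≤ Real.pi / 2 := by
    rw [abs_mul]; nlinarith [abs_nonneg (arg z), abs_nonneg p]
  exact abs_le.1 this

theorem mem_slitPlane_of_re_add_abs_im_pos {z : ℂ} (h : 0 < z.re + |z.im|) :
    z ∈ slitPlane := by
  rw [mem_slitPlane_iff, or_iff_not_imp_right, not_not]
  intro him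
  simpa [him] using h

end Complex

theorem weak_peak_function :
    DifferentiableOn ℂ (fun ζ : ℂ => Complex.exp (-((-ζ) ^ ((2:ℂ)/3))))
      {ζ : ℂ | ζ.re - |ζ.im| < 0} ∧
    (∀ ζ ∈ {ζ : ℂ | ζ.re - |ζ.im| < 0},
      ‖Complex.exp (-((-ζ) ^ ((2:ℂ)/3)))‖ < 1) ∧
    (∀ ζ ∈ closure {ζ : ℂ | ζ.re - |ζ.im| < 0}, ζ ≠ 0 →
      ‖Complex.exp (-((-ζ) ^ ((2:ℂ)/3)))‖ ≤ 1) ∧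
    Filter.Tendsto (fun ζ : ℂ => Complex.exp (-((-ζ) ^ ((2:ℂ)/3))))
      (nhdsWithin 0 (closure {ζ : ℂ | ζ.re - |ζ.im| < 0})) (nhds 1) := by
  have h23 : (2 : ℂ) / 3 = ((2 / 3 : ℝ) : ℂ) := by push_cast; rfl
  have h23_abs : |(2 / 3 : ℝ)| ≤ 2 / 3 := (abs_of_pos (by norm_num)).le
  have hG : ∀ ζ ∈ {ζ : ℂ | ζ.re - |ζ.im| < 0}, 0 < (-ζ).re + |(-ζ).im| := by
    intro ζ (hζ : ζ.re - |ζ.im| < 0)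
    rw [neg_re, neg_im, abs_neg]
    linarith
  have hclosure : ∀ ζ ∈ closure {ζ : ℂ | ζ.re - |ζ.im| < 0}, 0 ≤ (-ζ).re + |(-ζ).im| := by
    intro ζ hζ
    have : ζ.re - |ζ.im| ≤ 0 := closure_lt_subset_le (by fun_prop) continuous_const hζ
    rw [neg_re, neg_im, abs_neg]
    linarith
  refine ⟨fun ζ hζ => ?_, fun ζ hζ => ?_, fun ζ hζ _ => ?_, ?_⟩
  · exact (differentiableAt_id.neg.cpow (differentiableAt_const _)
      (mem_slitPlane_of_re_add_abs_im_pos (hG ζ hζ))).neg.cexp.differentiableWithinAt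
  · rw [norm_exp, neg_re, Real.exp_lt_one_iff, neg_lt_zero, h23]
    exact re_cpow_ofReal_pos h23_abs (hG ζ hζ)
  · rw [norm_exp, neg_re, Real.exp_le_one_iff, neg_nonpos, h23]
    exact re_cpow_ofReal_nonneg h23_abs (hclosure ζ hζ)
  · have hcont : ContinuousAt (fun ζ : ℂ => exp (-((-ζ) ^ ((2 : ℂ) / 3)))) 0 :=
      ((continuousAt_cpow_const_of_re_pos (by simp) (by norm_num)).comp
        continuousAt_neg).neg.cexp
    simpa using hcont.tendsto.mono_left nhdsWithin_le_nhds
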